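/- Let Φ be an element of the cyclic-word space F_cycl of the free algebra on A, B, C given by Φ = [ABC] − [BAC] − (a'_0/4)[A⁴] − (a_3/3)[A³] + (a_0/3)[B³] + a_2[A²B] + a_1[AB²] − (a_6/2)[A²] + a_5[AB] + (a_4/2)[B²] − (1/2)[C²] − a_9[A] + a_8[B]. Then the cyclic derivatives ∂Φ/∂C = 0, ∂Φ/∂B = 0, ∂Φ/∂A = 0 are exactly the three defining relations of A^{gen}: [A,B] = C, [A,C] = a_0B² + a_1{A,B} + a_2A² + a_4B + a_5A + a_8, and [B,C] = a'_0A³ − a_1B² − a_2{A,B} + a_3A² − a_5B + a_6A + a_9. -/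

import Mathlib

/-!
Rotating a word `w` by `s + 1` and dropping its last letter leaves the suffix of `w` after
position `s` followed by the prefix before it, so `cycDer` agrees with the usual
formula `∂[w]/∂x_j = ∑_{w_s = j} w_{>s} w_{<s}`. Evaluating this on the thirteen monomials of
`Φ`, the rational coefficients `1/4, 1/3, 1/2` cancel against the multiplicities `4, 3, 2` of
the derivatives of `[A⁴], [A³], [B³], [A²], [B²], [C²]`, and what remains are the relations.
-/

noncomputable section

/-- Ground ring with the central parameters; index convention:
`0 ↦ a₀, 1 ↦ a₀', 2 ↦ a₁, 3 ↦ a₂, 4 ↦ a₃, 5 ↦ a₄, 6 ↦ a₅, 7 ↦ a₆, 8 ↦ a₈, 9 ↦ a₉`. -/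
abbrev PRing := MvPolynomial (Fin 10) ℂ

abbrev FA := FreeAlgebra PRing (Fin 3)

def gA : FA := FreeAlgebra.ι PRing 0
def gB : FA := FreeAlgebra.ι PRing 1
def gC : FA := FreeAlgebra.ι PRing 2

def pa (i : Fin 10) : FA := algebraMap PRing FA (MvPolynomial.X i)

/-- The value in the free algebra of a word in the generators (word in `A=0, B=1, C=2`). -/
def wordVal (w : List (Fin 3)) : FA := (w.map (FreeAlgebra.ι PRing)).prod

/-- The cyclic derivative `∂[x_{i₁}⋯x_{i_r}]/∂x_j = ∑_{s : i_s = j}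
x_{i_{s+1}}⋯x_{i_r} x_{i_1}⋯x_{i_{s-1}}` of a cyclic word with respect to the
generator `j`. -/
def cycDer (j : Fin 3) (w : List (Fin 3)) : FA :=
  ∑ s ∈ Finset.range w.length,
    if w[s]? = some j then wordVal ((w.rotate (s + 1)).dropLast) else 0

/-- The cyclic derivative of the Calabi–Yau potential
`Φ = [ABC] - [BAC] - (a₀'/4)[A⁴] - (a₃/3)[A³] + (a₀/3)[B³] + a₂[A²B] + a₁[AB²]
 - (a₆/2)[A²] + a₅[AB] + (a₄/2)[B²] - (1/2)[C²] - a₉[A] + a₈[B]`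
with respect to generator `j`. -/
def DPhi (j : Fin 3) : FA :=
  cycDer j [0, 1, 2] - cycDer j [1, 0, 2]
    - (1/4 : ℂ) • (pa 1 * cycDer j [0, 0, 0, 0])
    - (1/3 : ℂ) • (pa 4 * cycDer j [0, 0, 0])
    + (1/3 : ℂ) • (pa 0 * cycDer j [1, 1, 1])
    + pa 3 * cycDer j [0, 0, 1]
    + pa 2 * cycDer j [0, 1, 1]
    - (1/2 : ℂ) • (pa 7 * cycDer j [0, 0])
    + pa 6 * cycDer j [0, 1]
    + (1/2 : ℂ) • (pa 5 * cycDer j [1, 1])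
    - (1/2 : ℂ) • cycDer j [2, 2]
    - pa 9 * cycDer j [0]
    + pa 8 * cycDer j [1]

theorem List.dropLast_rotate_succ {α : Type*} {l : List α} {s : ℕ} (hs : s < l.length) :
    (l.rotate (s + 1)).dropLast = l.drop (s + 1) ++ l.take s := by
  rw [List.rotate_eq_drop_append_take hs, List.take_succ_eq_append_getElem hs,
    ← List.append_assoc, List.dropLast_concat]

lemma wordVal_append (u v : List (Fin 3)) : wordVal (u ++ v) = wordVal u * wordVal v := by
  simp [wordVal]

lemma cycDer_eq_sum_drop_mul_take (j : Fin 3) (w : List (Fin 3)) :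
    cycDer j w = ∑ s ∈ Finset.range w.length,
      if w[s]? = some j then wordVal (w.drop (s + 1)) * wordVal (w.take s) else 0 := by
  refine Finset.sum_congr rfl fun s hs => ?_
  rw [List.dropLast_rotate_succ (Finset.mem_range.1 hs), wordVal_append]

/-- the equations `∂Φ/∂C = 0`, `∂Φ/∂B = 0`, `∂Φ/∂A = 0` are exactly the
three defining relations of `𝒜^{gen}`: each cyclic derivative equals the difference of
the two sides of the corresponding relation. -/
theorem potential_gives_Agen_relations :
    DPhi 2 = gA * gB - gB * gA - gC ∧
    DPhi 1 = gC * gA - gA * gC +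
      (pa 0 * gB ^ 2 + pa 2 * (gA * gB + gB * gA) + pa 3 * gA ^ 2 +
        pa 5 * gB + pa 6 * gA + pa 8) ∧
    DPhi 0 = gB * gC - gC * gB -
      (pa 1 * gA ^ 3 - pa 2 * gB ^ 2 - pa 3 * (gA * gB + gB * gA) + pa 4 * gA ^ 2 -
        pa 6 * gB + pa 7 * gA + pa 9) := by
  refine ⟨?_, ?_, ?_⟩ <;>
    simp [DPhi, cycDer_eq_sum_drop_mul_take, Finset.sum_range_succ, wordVal, gA, gB, gC, mul_add,
      pow_succ, mul_assoc, ← add_smul] <;>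
    norm_num <;> abel

end
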